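/- arXiv:1307.1224 — 4 statements merged into one kernel-verified Lean document; each statement's English description precedes it below -/
import Mathlib

section
/- Let a = a(n), b = b(n) be sequences of positive integers with (a+b)^2 = o(n). Then for all sufficiently large n, n^b * |1/(b! * C(n-a, b)) - 1/n^b| < 4*(a+b)*b/n, where C(n-a,b) is the binomial coefficient. -/
set_option maxHeartbeats 1000000


open Filter

/-- Let `a = a(n)`, `b = b(n)` be sequences of positive integers with `(a+b)² = o(n)`.
Then for all sufficiently large `n`,
`n^b * |1/(b! * C(n-a, b)) - 1/n^b| < 4 (a+b) b / n`. -/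
theorem stmt_4 (a b : ℕ → ℕ) (ha : ∀ n, 0 < a n) (hb : ∀ n, 0 < b n)
    (hsmall : Tendsto (fun n : ℕ => ((a n + b n : ℝ)) ^ 2 / n) atTop (nhds 0)) :
    ∀ᶠ n : ℕ in atTop,
      (n : ℝ) ^ (b n) *
          |1 / (((b n).factorial : ℝ) * ((n - a n).choose (b n) : ℝ)) -
            1 / (n : ℝ) ^ (b n)| <
        4 * (((a n + b n) * b n : ℕ) : ℝ) / n := by
  have h16 : ∀ᶠ n : ℕ in atTop, ((a n + b n : ℝ)) ^ 2 / n < 1/16 :=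
    hsmall.eventually_lt_const (by norm_num)
  filter_upwards [h16, eventually_ge_atTop 1] with n hn16 hn1
  have hA1 := ha n
  have hB1 := hb n
  set A := a n with hAdef
  set B := b n with hBdef
  set s := A + B with hsdef
  have hs2 : 2 ≤ s := by omega
  have hnpos : (0:ℝ) < n := by
    have : (1:ℝ) ≤ n := by exact_mod_cast hn1
    linarith
  -- 16 s^2 < n in ℝ and ℕ
  have hs16 : 16 * ((s:ℝ))^2 < n := by
    have := (div_lt_iff₀ hnpos).mp hn16
    rw [hsdef]
    push_cast
    linarith
  have hs16n : 16 * s * s < n := by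
    have : ((16 * s * s : ℕ) : ℝ) < (n : ℝ) := by push_cast; linarith [sq (s:ℝ), sq_abs (s:ℝ), (sq (s:ℝ)).symm ▸ hs16]
    exact_mod_cast this
  have h2s : 2 * s < n := by nlinarith
  have hsn : s ≤ n := by omega
  set m := n - s with hmdef
  have hmpos' : 0 < m := by omega
  have hm : (m:ℝ) = (n:ℝ) - s := by
    have : ((m:ℕ):ℝ) = ((n:ℕ):ℝ) - ((s:ℕ):ℝ) := by
      rw [hmdef]; push_cast [Nat.cast_sub hsn]; ring
    exact this
  have hmpos : (0:ℝ) < m := by exact_mod_cast hmpos'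
  have hn2m : (n:ℝ) ≤ 2 * m := by
    have : ((2*s:ℕ):ℝ) < n := by exact_mod_cast h2s
    push_cast at this; linarith [hm]
  clear_value A B s m
  -- descending factorial
  have hfact : ((B.factorial : ℝ)) * ((n - A).choose B : ℝ) = ((n-A).descFactorial B : ℝ) := by
    rw [← Nat.cast_mul, Nat.descFactorial_eq_factorial_mul_choose]
  set D : ℝ := ((n-A).descFactorial B : ℝ) with hDdef
  have hDle' : (n-A).descFactorial B ≤ n ^ B :=
    (Nat.descFactorial_le_pow _ _).trans (Nat.pow_le_pow_left (Nat.sub_le _ _) _)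
  have hDge' : m ^ B ≤ (n-A).descFactorial B := by
    have h1 : m ≤ (n - A) + 1 - B := by omega
    exact (Nat.pow_le_pow_left h1 _).trans (Nat.pow_sub_le_descFactorial _ _)
  have hDle : D ≤ (n:ℝ) ^ B := by
    have : (((n-A).descFactorial B : ℕ) : ℝ) ≤ ((n ^ B : ℕ) : ℝ) := by exact_mod_cast hDle'
    push_cast at this; exact this
  have hDge : (m:ℝ) ^ B ≤ D := by
    have : ((m ^ B : ℕ) : ℝ) ≤ (((n-A).descFactorial B : ℕ) : ℝ) := by exact_mod_cast hDge'
    push_cast at this; exact this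
  have hDpos : 0 < D := lt_of_lt_of_le (pow_pos hmpos B) hDge
  clear_value D
  have hnBpos : (0:ℝ) < (n:ℝ) ^ B := pow_pos hnpos B
  rw [hfact]
  have habs : |1/D - 1/(n:ℝ)^B| = 1/D - 1/(n:ℝ)^B :=
    abs_of_nonneg (sub_nonneg.mpr (one_div_le_one_div_of_le hDpos hDle))
  rw [habs, mul_sub, mul_one_div, mul_one_div, div_self (ne_of_gt hnBpos)]
  -- set up x = s/m
  set x : ℝ := (s:ℝ)/m with hxdef
  have hx0 : 0 ≤ x := div_nonneg (by positivity) (le_of_lt hmpos)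
  clear_value x
  have hBx : (B:ℝ) * x ≤ 1/8 := by
    have hBsn : (B:ℝ) ≤ s := by exact_mod_cast (by omega : B ≤ s)
    have hBs : (B:ℝ) * s ≤ (s:ℝ) * s := by nlinarith [Nat.cast_nonneg (α := ℝ) s]
    have h8 : 8 * ((B:ℝ) * s) ≤ m := by nlinarith
    rw [hxdef, ← mul_div_assoc, div_le_iff₀ hmpos]
    linarith
  have hx18 : x ≤ 1/8 := by
    have hB1' : (1:ℝ) ≤ B := by exact_mod_cast hB1
    have := mul_le_mul_of_nonneg_right hB1' hx0
    linarith
  have hbern : 1 - (B:ℝ) * x ≤ (1 - x) ^ B := by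
    have h := one_add_mul_le_pow (a := -x) (by linarith) B
    have e : (1 + -x) = 1 - x := by ring
    rw [e] at h
    linarith [h]
  have hmul : (1 - (B:ℝ)*x) * (1+x)^B ≤ 1 := by
    have h1 : (1 - (B:ℝ)*x) * (1+x)^B ≤ (1-x)^B * (1+x)^B :=
      mul_le_mul_of_nonneg_right hbern (pow_nonneg (by linarith) B)
    have h2 : (1-x)^B * (1+x)^B = (1 - x*x)^B := by
      rw [← mul_pow]; ring_nf
    have h4 : x*x ≤ (1/8)*(1/8) := mul_le_mul hx18 hx18 hx0 (by norm_num)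
    have h3 : (1 - x*x)^B ≤ 1 :=
      pow_le_one₀ (by linarith) (by linarith [mul_self_nonneg x])
    calc (1 - (B:ℝ)*x) * (1+x)^B ≤ (1-x)^B * (1+x)^B := h1
      _ = (1 - x*x)^B := h2
      _ ≤ 1 := h3
  set P : ℝ := (1+x)^B with hPdef
  have hP0 : 0 ≤ P := pow_nonneg (by linarith) B
  clear_value P
  have hP87 : P ≤ 8/7 := by linarith [hmul, mul_le_mul_of_nonneg_right hBx hP0]
  have hP1 : P - 1 ≤ (8/7) * ((B:ℝ) * x) := by
    have h5 : (B:ℝ)*x*P ≤ (B:ℝ)*x*(8/7) :=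
      mul_le_mul_of_nonneg_left hP87 (mul_nonneg (Nat.cast_nonneg _) hx0)
    linarith [hmul]
  -- n^B / D ≤ P
  have hmain : (n:ℝ)^B / D ≤ P := by
    have h1 : (n:ℝ)^B / D ≤ (n:ℝ)^B / (m:ℝ)^B :=
      div_le_div_of_nonneg_left (le_of_lt hnBpos) (pow_pos hmpos B) hDge
    have h2 : (n:ℝ)^B / (m:ℝ)^B = ((n:ℝ)/m)^B := (div_pow _ _ _).symm
    have h3 : (n:ℝ)/m = 1 + x := by
      rw [hxdef]; field_simp; linarith [hm]
    rw [h2, h3] at h1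
    rw [hPdef]
    exact h1
  -- final strict inequality
  have hBs0 : (0:ℝ) < (B:ℝ) * s := by
    have : (0:ℝ) < (B:ℝ) := by exact_mod_cast hB1
    have : (0:ℝ) < (s:ℝ) := by exact_mod_cast (by omega : 0 < s)
    positivity
  have hfinal : (8/7) * ((B:ℝ) * x) < 4 * (((s * B : ℕ)):ℝ) / n := by
    rw [lt_div_iff₀ hnpos]
    push_cast
    have he : (8/7) * ((B:ℝ) * x) * n = ((8/7)*(B:ℝ)*(s:ℝ)*n)/m := by
      rw [hxdef]; ring
    rw [he, div_lt_iff₀ hmpos]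
    linarith [mul_le_mul_of_nonneg_left hn2m (le_of_lt hBs0), mul_pos hBs0 hmpos]
  calc (n:ℝ)^B / D - 1 ≤ P - 1 := by linarith
    _ ≤ (8/7) * ((B:ℝ) * x) := hP1
    _ < 4 * (((s * B : ℕ)):ℝ) / n := hfinal
end

section
/- For positive integers n, e, sigma, j with e < n and j <= n - e, in a uniformly random rooted ordered forest with sigma trees and n-e edges, the probability that the root of the first tree has degree j is at most 4j/2^j, and the probability that the sum of root degrees of the first two trees equals j is at most 4j(j+1)/2^j. -/
/-!
With `N = 2e + τ`, both `Φ_{τ+1,e}` and `Φ_{τ,e+1}` are rational multiples of `binom(N+1, e)`,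
and comparing the factors gives `2τ Φ_{τ+1,e} ≤ (τ+1) Φ_{τ,e+1}`: trading a tree for an edge
at least halves the count, up to the factor `(τ+1)/τ`. Iterating `k` times yields
`2^k σ Φ_{σ+k,m} ≤ (σ+k) Φ_{σ,m+k} ≤ (k+1) σ Φ_{σ,m+k}`. Since `Φ` is monotone in both
arguments, the one remaining edge and the shift from `σ+j-2` to `σ+j-1` trees cost nothing.
-/

/-- `Phi σ e = (σ / (2e+σ)) * binomial (2e+σ) e` is the number of rooted ordered forests
with `σ` trees and `e` edges. -/
def Phi (σ e : ℕ) : ℚ := (σ : ℚ) * ((2 * e + σ).choose e : ℚ) / ((2 * e + σ : ℕ) : ℚ)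

lemma Phi_nonneg (σ e : ℕ) : 0 ≤ Phi σ e := by
  unfold Phi; positivity

lemma Phi_pos {σ : ℕ} (e : ℕ) (hσ : 0 < σ) : 0 < Phi σ e := by
  have : 0 < (2 * e + σ).choose e := Nat.choose_pos (by omega)
  unfold Phi; positivity

lemma Phi_succ_left_eq (τ e : ℕ) :
    Phi (τ + 1) e = (τ + 1) * ((2 * e + τ).choose e : ℚ) / (e + τ + 1) := by
  have h := Nat.choose_mul_succ_eq (2 * e + τ) e
  rw [show 2 * e + τ + 1 - e = e + τ + 1 by omega] at h
  have h' : ((2 * e + τ).choose e : ℚ) * (2 * e + τ + 1) =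
      ((2 * e + τ + 1).choose e : ℚ) * (e + τ + 1) := by exact_mod_cast h
  rw [Phi, show 2 * e + (τ + 1) = 2 * e + τ + 1 by ring]
  rw [div_eq_div_iff (by positivity) (by positivity)]
  push_cast
  linear_combination (-((τ : ℚ) + 1)) * h'

lemma Phi_succ_right_eq (τ e : ℕ) :
    Phi τ (e + 1) = τ * ((2 * e + τ + 1).choose e : ℚ) / (e + 1) := by
  have h := Nat.add_one_mul_choose_eq (2 * e + τ + 1) e
  have h' : ((2 * e + τ + 1 + 1 : ℕ) : ℚ) * ((2 * e + τ + 1).choose e : ℚ) =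
      ((2 * e + τ + 1 + 1).choose (e + 1) : ℚ) * (e + 1) := by exact_mod_cast h
  rw [Phi, show 2 * (e + 1) + τ = 2 * e + τ + 1 + 1 by ring]
  rw [div_eq_div_iff (by positivity) (by positivity)]
  linear_combination (-(τ : ℚ)) * h'

lemma Phi_le_succ_left (τ e : ℕ) : Phi τ e ≤ Phi (τ + 1) e := by
  rcases Nat.eq_zero_or_pos τ with rfl | hτ
  · simpa [Phi] using Phi_nonneg 1 e
  rw [Phi_succ_left_eq, Phi, div_le_div_iff₀ (by positivity) (by positivity)]
  have hfac : (τ : ℚ) * (e + τ + 1) ≤ (τ + 1) * (2 * e + τ) := by nlinarith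
  push_cast
  nlinarith [hfac, (by positivity : (0 : ℚ) ≤ ((2 * e + τ).choose e : ℚ))]

lemma Phi_le_succ_right (τ e : ℕ) : Phi τ e ≤ Phi τ (e + 1) := by
  rcases Nat.eq_zero_or_pos τ with rfl | hτ
  · simp [Phi]
  rw [Phi_succ_right_eq, Phi]
  have hN : ((e : ℚ) + 1) ≤ ((2 * e + τ : ℕ) : ℚ) := by push_cast; norm_cast; omega
  have hC : ((2 * e + τ).choose e : ℚ) ≤ ((2 * e + τ + 1).choose e : ℚ) := by
    exact_mod_cast Nat.choose_le_succ _ _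
  gcongr

lemma two_mul_Phi_succ_left_le (τ e : ℕ) :
    2 * τ * Phi (τ + 1) e ≤ (τ + 1) * Phi τ (e + 1) := by
  rcases Nat.eq_zero_or_pos τ with rfl | hτ
  · simp [Phi]
  rw [Phi_succ_right_eq, Phi, show 2 * e + (τ + 1) = 2 * e + τ + 1 by ring]
  have hτ' : (1 : ℚ) ≤ τ := by exact_mod_cast hτ
  rw [mul_div_assoc', mul_div_assoc', div_le_div_iff₀ (by positivity) (by positivity)]
  push_cast
  have hC : (0 : ℚ) ≤ ((2 * e + τ + 1).choose e : ℚ) := by positivity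
  have hfac : 2 * (e + 1) * ((τ : ℚ) * (τ + 1)) ≤ (2 * e + τ + 1) * (τ * (τ + 1)) :=
    mul_le_mul_of_nonneg_right (by linarith) (by positivity)
  nlinarith [mul_le_mul_of_nonneg_right hfac hC]

lemma two_pow_mul_Phi_add_left_le (σ k m : ℕ) :
    2 ^ k * σ * Phi (σ + k) m ≤ (σ + k) * Phi σ (m + k) := by
  induction k generalizing σ with
  | zero => simp
  | succ k ih =>
    refine le_of_mul_le_mul_left ?_ (by positivity : (0 : ℚ) < σ + 1)
    calc ((σ : ℚ) + 1) * (2 ^ (k + 1) * σ * Phi (σ + (k + 1)) m)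
        = 2 * σ * (2 ^ k * ((σ + 1 : ℕ) : ℚ) * Phi (σ + 1 + k) m) := by
          rw [show σ + 1 + k = σ + (k + 1) by omega]; push_cast; ring
      _ ≤ 2 * σ * ((((σ + 1 : ℕ) : ℚ) + k) * Phi (σ + 1) (m + k)) :=
          mul_le_mul_of_nonneg_left (ih _) (by positivity)
      _ = (σ + 1 + k) * (2 * σ * Phi (σ + 1) (m + k)) := by push_cast; ring
      _ ≤ (σ + 1 + k) * ((σ + 1) * Phi σ (m + (k + 1))) :=
          mul_le_mul_of_nonneg_left (two_mul_Phi_succ_left_le σ (m + k)) (by positivity)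
      _ = ((σ : ℚ) + 1) * ((σ + (k + 1 : ℕ)) * Phi σ (m + (k + 1))) := by push_cast; ring

lemma two_pow_mul_Phi_add_left_le_of_pos (σ k m : ℕ) (hσ : 0 < σ) :
    2 ^ k * Phi (σ + k) m ≤ (k + 1) * Phi σ (m + k + 1) := by
  have hσ' : (1 : ℚ) ≤ σ := by exact_mod_cast hσ
  refine le_of_mul_le_mul_left ?_ (by positivity : (0 : ℚ) < σ)
  calc (σ : ℚ) * (2 ^ k * Phi (σ + k) m) = 2 ^ k * σ * Phi (σ + k) m := by ring
    _ ≤ (σ + k) * Phi σ (m + k) := two_pow_mul_Phi_add_left_le σ k m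
    _ ≤ (σ + k) * Phi σ (m + k + 1) :=
        mul_le_mul_of_nonneg_left (Phi_le_succ_right σ _) (by positivity)
    _ ≤ σ * ((k + 1) * Phi σ (m + k + 1)) := by
        nlinarith [Phi_nonneg σ (m + k + 1), mul_le_mul_of_nonneg_right hσ'
          (mul_nonneg k.cast_nonneg (Phi_nonneg σ (m + k + 1)))]

theorem stmt_5_general (n e σ j : ℕ) (hσ : 0 < σ) (hj : 0 < j)
    (hjn : j ≤ n - e) :
    Phi (σ + j - 1) (n - e - j) / Phi σ (n - e) ≤ 4 * (j : ℚ) / 2 ^ j ∧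
    ((j : ℚ) + 1) * (Phi (σ + j - 2) (n - e - j) / Phi σ (n - e)) ≤
      4 * (j : ℚ) * ((j : ℚ) + 1) / 2 ^ j := by
  obtain ⟨k, rfl⟩ : ∃ k, j = k + 1 := ⟨j - 1, by omega⟩
  obtain ⟨m, hm⟩ : ∃ m, n - e = m + k + 1 := ⟨n - e - (k + 1), by omega⟩
  rw [hm, show m + k + 1 - (k + 1) = m by omega, show σ + (k + 1) - 1 = σ + k by omega]
  have hpos := Phi_pos (m + k + 1) hσ
  have hfirst : Phi (σ + k) m / Phi σ (m + k + 1) ≤ 4 * ((k + 1 : ℕ) : ℚ) / 2 ^ (k + 1) := by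
    rw [div_le_div_iff₀ hpos (by positivity)]
    calc Phi (σ + k) m * 2 ^ (k + 1) = 2 * (2 ^ k * Phi (σ + k) m) := by ring
      _ ≤ 2 * ((k + 1) * Phi σ (m + k + 1)) := by
          linarith [two_pow_mul_Phi_add_left_le_of_pos σ k m hσ]
      _ ≤ 4 * ((k + 1 : ℕ) : ℚ) * Phi σ (m + k + 1) := by
          push_cast; nlinarith [Phi_nonneg σ (m + k + 1)]
  have hsecond : Phi (σ + (k + 1) - 2) m ≤ Phi (σ + k) m := by
    simpa [show σ + (k + 1) - 2 + 1 = σ + k by omega] using Phi_le_succ_left (σ + (k + 1) - 2) m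
  refine ⟨hfirst, ?_⟩
  calc (((k + 1 : ℕ) : ℚ) + 1) * (Phi (σ + (k + 1) - 2) m / Phi σ (m + k + 1))
      ≤ (((k + 1 : ℕ) : ℚ) + 1) * (4 * ((k + 1 : ℕ) : ℚ) / 2 ^ (k + 1)) :=
        mul_le_mul_of_nonneg_left ((div_le_div_of_nonneg_right hsecond hpos.le).trans hfirst)
          (by positivity)
    _ = 4 * ((k + 1 : ℕ) : ℚ) * (((k + 1 : ℕ) : ℚ) + 1) / 2 ^ (k + 1) := by ring

/-- In a uniformly random rooted ordered forest with `σ` trees and `n - e` edges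
(`e < n`, `j ≤ n - e`), the probability that the root of the first tree has degree `j`,
namely `Φ_{σ+j-1, n-e-j} / Φ_{σ, n-e}`, is at most `4j/2^j`, and the probability that
the root degrees of the first two trees sum to `j`, namely
`(j+1) Φ_{σ+j-2, n-e-j} / Φ_{σ, n-e}`, is at most `4j(j+1)/2^j`. -/
theorem stmt_5 (n e σ j : ℕ) (hn : 0 < n) (he : 0 < e) (hσ : 0 < σ) (hj : 0 < j)
    (hen : e < n) (hjn : j ≤ n - e) :
    Phi (σ + j - 1) (n - e - j) / Phi σ (n - e) ≤ 4 * (j : ℚ) / 2 ^ j ∧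
    ((j : ℚ) + 1) * (Phi (σ + j - 2) (n - e - j) / Phi σ (n - e)) ≤
      4 * (j : ℚ) * ((j : ℚ) + 1) / 2 ^ j :=
  stmt_5_general n e σ j hσ hj hjn
end

section
/- For positive integers n, e, sigma, j with e < n and 1 <= j <= n-e, the ratio Phi_{sigma+j-1, n-e-j} / Phi_{sigma, n-e} is at most ((sigma+j-1)/sigma) * 4/2^j, which is at most 4j/2^j. -/
noncomputable def Gq (a f : ℕ) : ℚ := ((2 * f + a).choose f : ℚ) / ((2 * f + a : ℕ) : ℚ)

lemma Gq_pos (a f : ℕ) (ha : 1 ≤ a) : 0 < Gq a f := by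
  unfold Gq
  apply div_pos
  · exact_mod_cast Nat.choose_pos (by omega)
  · exact_mod_cast (by omega : 0 < 2 * f + a)

lemma choose_key (N k : ℕ) :
    ((N + 1).choose (k + 1) : ℚ) * ((k : ℚ) + 1) = ((N : ℚ) + 1) * ((N.choose k : ℕ) : ℚ) := by
  have h := congrArg (Nat.cast : ℕ → ℚ) (Nat.add_one_mul_choose_eq N k)
  push_cast at h
  linarith

lemma Gq_half (a f : ℕ) (ha : 1 ≤ a) : Gq (a + 1) f ≤ Gq a (f + 1) / 2 := by
  unfold Gq
  have h1 : 2 * f + (a + 1) = (2 * f + a) + 1 := by ring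
  have h2 : 2 * (f + 1) + a = ((2 * f + a) + 1) + 1 := by ring
  rw [h1, h2]
  have key := choose_key (2 * f + a + 1) f
  have hC1 : (0 : ℚ) ≤ (((2 * f + a) + 1).choose f : ℚ) := by positivity
  have hfa : ((1 : ℚ)) ≤ (a : ℚ) := by exact_mod_cast ha
  have hf0 : (0 : ℚ) ≤ (f : ℚ) := by positivity
  have hden1 : (0 : ℚ) < (((2 * f + a + 1 : ℕ)) : ℚ) := by exact_mod_cast Nat.succ_pos _
  have hden2 : (0 : ℚ) < (((2 * f + a + 1 + 1 : ℕ)) : ℚ) := by exact_mod_cast Nat.succ_pos _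
  rw [div_div, div_le_div_iff₀ hden1 (by positivity)]
  push_cast at key ⊢
  nlinarith [key, hC1, hfa, hf0, mul_nonneg hC1 hf0]

lemma Gq_base (a f : ℕ) (ha : 1 ≤ a) : Gq a f ≤ Gq a (f + 1) := by
  unfold Gq
  have h2 : 2 * (f + 1) + a = ((2 * f + a) + 1) + 1 := by ring
  rw [h2]
  have key := choose_key (2 * f + a + 1) f
  have hmono : ((2 * f + a).choose f : ℚ) ≤ ((2 * f + a + 1).choose f : ℚ) := by
    exact_mod_cast Nat.choose_le_choose f (Nat.le_succ _)
  have hC1 : (0 : ℚ) ≤ ((2 * f + a + 1).choose f : ℚ) := by positivity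
  have hfa : ((1 : ℚ)) ≤ (a : ℚ) := by exact_mod_cast ha
  have hf0 : (0 : ℚ) ≤ (f : ℚ) := by positivity
  have hden1 : (0 : ℚ) < (((2 * f + a : ℕ)) : ℚ) := by exact_mod_cast (by omega : 0 < 2*f+a)
  have hden2 : (0 : ℚ) < (((2 * f + a + 1 + 1 : ℕ)) : ℚ) := by exact_mod_cast Nat.succ_pos _
  rw [div_le_div_iff₀ hden1 hden2]
  push_cast at key ⊢
  nlinarith [key, hC1, hfa, hf0, hmono, mul_nonneg hC1 hf0, mul_nonneg (by positivity : (0:ℚ) ≤ ((2*f+a).choose f : ℚ)) hf0]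

lemma Gq_chain (a : ℕ) (ha : 1 ≤ a) : ∀ i k : ℕ, Gq (a + i) k ≤ Gq a (k + i + 1) / 2 ^ i := by
  intro i
  induction i with
  | zero =>
      intro k
      simpa using Gq_base a k ha
  | succ i ih =>
      intro k
      have h1 : Gq (a + (i + 1)) k ≤ Gq (a + i) (k + 1) / 2 := by
        have := Gq_half (a + i) k (by omega)
        simpa [Nat.add_assoc] using this
      have h2 := ih (k + 1)
      have : Gq (a + i) (k + 1) / 2 ≤ Gq a (k + (i + 1) + 1) / 2 ^ (i + 1) := by
        have hk : k + 1 + i + 1 = k + (i + 1) + 1 := by ring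
        rw [hk] at h2
        rw [pow_succ]
        calc Gq (a + i) (k + 1) / 2 ≤ (Gq a (k + (i + 1) + 1) / 2 ^ i) / 2 := by linarith
          _ = Gq a (k + (i + 1) + 1) / (2 ^ i * 2) := by ring
      linarith

lemma Phi_eq (a f : ℕ) : Phi a f = (a : ℚ) * Gq a f := by
  unfold Phi Gq; ring

/-- For positive integers `n, e, σ, j` with `e < n` and `1 ≤ j ≤ n - e`, the ratio
`Φ_{σ+j-1, n-e-j} / Φ_{σ, n-e}` is at most `((σ+j-1)/σ) * 4/2^j`, which in turn is at
most `4j/2^j`. -/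
theorem stmt_6 (n e σ j : ℕ) (hn : 0 < n) (he : 0 < e) (hσ : 0 < σ) (hj : 1 ≤ j)
    (hen : e < n) (hjn : j ≤ n - e) :
    Phi (σ + j - 1) (n - e - j) / Phi σ (n - e) ≤
        (((σ : ℚ) + (j : ℚ) - 1) / (σ : ℚ)) * (4 / 2 ^ j) ∧
    (((σ : ℚ) + (j : ℚ) - 1) / (σ : ℚ)) * (4 / 2 ^ j) ≤ 4 * (j : ℚ) / 2 ^ j := by
  have hσq : (1 : ℚ) ≤ (σ : ℚ) := by exact_mod_cast hσ
  have hjq : (1 : ℚ) ≤ (j : ℚ) := by exact_mod_cast hj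
  set m := n - e with hm
  set i := j - 1 with hi
  set k := m - j with hk
  have hji : j = i + 1 := by omega
  have hmk : m = k + i + 1 := by omega
  have e1 : σ + j - 1 = σ + i := by omega
  have e2 : n - e - j = k := by omega
  rw [e1]
  have hG : Gq (σ + i) k ≤ Gq σ m / 2 ^ i := by
    have := Gq_chain σ hσ i k
    rwa [← hmk] at this
  have hg : 0 < Gq σ m := Gq_pos σ m hσ
  have hx : 0 < Gq (σ + i) k := Gq_pos (σ + i) k (by omega)
  have hpi : (0 : ℚ) < 2 ^ i := by positivity
  have hpj : (0 : ℚ) < 2 ^ j := by positivity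
  have hcast : ((σ + i : ℕ) : ℚ) = (σ : ℚ) + (j : ℚ) - 1 := by
    rw [hji]; push_cast; ring
  constructor
  · have hxg : Gq (σ + i) k / Gq σ m ≤ 4 / 2 ^ j := by
      rw [div_le_div_iff₀ hg hpj]
      have h2j : (2 : ℚ) ^ j = 2 ^ i * 2 := by rw [hji, pow_succ]
      have hxe : Gq (σ + i) k * 2 ^ i ≤ Gq σ m := by
        rw [← le_div_iff₀ hpi]; exact hG
      nlinarith [hxe, hg.le, hpi.le]
    have heq : Phi (σ + i) k / Phi σ m =
        (((σ + i : ℕ) : ℚ) / (σ : ℚ)) * (Gq (σ + i) k / Gq σ m) := by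
      rw [Phi_eq, Phi_eq, mul_div_mul_comm]
    rw [heq, hcast]
    gcongr
    exact div_nonneg (by linarith) (by linarith)
  · rw [div_mul_div_comm, div_le_div_iff₀ (by positivity) hpj]
    have hkey : (σ : ℚ) + (j : ℚ) - 1 ≤ (σ : ℚ) * (j : ℚ) := by
      nlinarith [mul_nonneg (sub_nonneg.2 hσq) (sub_nonneg.2 hjq)]
    nlinarith [hpj.le, hkey, hσq]
end

section
/- Let Z_r be a Galton-Watson branching process with offspring distribution xi satisfying P(xi=1) = 1 - p and P(xi=2) = p for some 0 < p <= 1, started from Z_0 = 1. Then P(Z_r = 0) = 0 for all r, E(Z_r) = (1+p)^r, and for any 1 < gamma < 1+p, P(Z_r <= gamma^r) <= c*exp(-c'*r) for some positive constants c, c' depending on p and gamma. -/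
/-!
Let `f s = (1 - p) s + p s²` be the generating function of the offspring law. `Z r` is determined
by the generations before `r`, which are independent of generation `r`; conditioning on `Z r` gives
`E[h (Z (r+1))] = E[φ (Z r)]` with `φ n = E[h (ξ(r,0) + ⋯ + ξ(r,n-1))]`. For `h n = s ^ n` this is
`E[s ^ Z (r+1)] = E[f(s) ^ Z r]`, so `E[s ^ Z r] = f^[r] s`; for `h n = n` it is
`E[Z (r+1)] = (1 + p) E[Z r]`.

For the lower deviation pick `γ < β < 1 + p`, put `ε = (1 + p - β) / p`, `k = ⌈r log_β γ⌉` and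
`s = 1 - ε / β ^ k`. On `{Z r ≤ γ ^ r}` we have `Z r ≤ β ^ k`, so Bernoulli's inequality gives
`s ^ Z r ≥ 1 - ε`, and Markov's inequality bounds the probability by `f^[r] s / (1 - ε)`. Along the
orbit of `s`, the distance `1 - x` to `1` grows by the factor `1 + p x ≥ β` as long as `x ≥ 1 - ε`,
so it exceeds `ε` after `k` steps; on `[0, 1 - ε]` the map `f` contracts by `1 - p ε`. Hence
`f^[r] s ≤ (1 - p ε) ^ (r - k)`, which decays exponentially because `k / r → log_β γ < 1`.
-/

open MeasureTheory ProbabilityTheory Finset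

namespace GaltonWatson

def offspringPGF (p x : ℝ) : ℝ := (1 - p) * x + p * x ^ 2

section Analytic

variable {p ε x : ℝ}

theorem offspringPGF_nonneg (hp0 : 0 ≤ p) (hp1 : p ≤ 1) (hx : 0 ≤ x) : 0 ≤ offspringPGF p x := by
  unfold offspringPGF; nlinarith [mul_nonneg hp0 (sq_nonneg x)]

theorem offspringPGF_le_self (hp0 : 0 ≤ p) (hx0 : 0 ≤ x) (hx1 : x ≤ 1) : offspringPGF p x ≤ x := by
  unfold offspringPGF; nlinarith [mul_nonneg (mul_nonneg hp0 hx0) (sub_nonneg.2 hx1)]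

theorem mapsTo_offspringPGF_Icc (hp0 : 0 ≤ p) (hp1 : p ≤ 1) {a : ℝ} (ha : a ≤ 1) :
    Set.MapsTo (offspringPGF p) (Set.Icc 0 a) (Set.Icc 0 a) := fun _ ⟨hx0, hxa⟩ =>
  ⟨offspringPGF_nonneg hp0 hp1 hx0, (offspringPGF_le_self hp0 hx0 (hxa.trans ha)).trans hxa⟩

theorem offspringPGF_le_mul (hp0 : 0 ≤ p) (hx0 : 0 ≤ x) (hx : x ≤ 1 - ε) :
    offspringPGF p x ≤ (1 - p * ε) * x := by
  unfold offspringPGF; nlinarith [mul_nonneg (mul_nonneg hp0 hx0) (sub_nonneg.2 hx)]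

theorem mul_one_sub_le_one_sub_offspringPGF (hp0 : 0 ≤ p) (hx1 : x ≤ 1) (hx : 1 - ε ≤ x) :
    (1 + p * (1 - ε)) * (1 - x) ≤ 1 - offspringPGF p x := by
  unfold offspringPGF; nlinarith [mul_nonneg (mul_nonneg hp0 (sub_nonneg.2 hx)) (sub_nonneg.2 hx1)]

theorem iterate_offspringPGF_le_pow_mul (hp0 : 0 ≤ p) (hp1 : p ≤ 1) (hε0 : 0 ≤ ε) (hε1 : ε ≤ 1)
    (hx0 : 0 ≤ x) (hx : x ≤ 1 - ε) (m : ℕ) :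
    (offspringPGF p)^[m] x ≤ (1 - p * ε) ^ m * x := by
  have hmaps := (mapsTo_offspringPGF_Icc hp0 hp1 (a := 1 - ε) (by linarith)).iterate
  have hρ : 0 ≤ 1 - p * ε := by nlinarith
  induction m with
  | zero => simp
  | succ m ih =>
    obtain ⟨hy0, hy⟩ := hmaps m ⟨hx0, hx⟩
    rw [Function.iterate_succ_apply', pow_succ']
    calc offspringPGF p ((offspringPGF p)^[m] x) ≤ (1 - p * ε) * (offspringPGF p)^[m] x :=
          offspringPGF_le_mul hp0 hy0 hy
      _ ≤ (1 - p * ε) * ((1 - p * ε) ^ m * x) := mul_le_mul_of_nonneg_left ih hρ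
      _ = _ := by ring

theorem iterate_offspringPGF_le_max (hp0 : 0 ≤ p) (hp1 : p ≤ 1) (hε : ε ≤ 1)
    (hx0 : 0 ≤ x) (hx1 : x ≤ 1) (j : ℕ) :
    (offspringPGF p)^[j] x ≤ max (1 - ε) (1 - (1 + p * (1 - ε)) ^ j * (1 - x)) := by
  have hmaps := (mapsTo_offspringPGF_Icc hp0 hp1 le_rfl).iterate
  induction j with
  | zero => simp
  | succ j ih =>
    obtain ⟨hy0, hy1⟩ := hmaps j ⟨hx0, hx1⟩
    set y := (offspringPGF p)^[j] x
    rw [Function.iterate_succ_apply']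
    rcases le_or_gt y (1 - ε) with hy | hy
    · exact le_max_of_le_left ((offspringPGF_le_self hp0 hy0 hy1).trans hy)
    · have hyj : (1 + p * (1 - ε)) ^ j * (1 - x) ≤ 1 - y := by
        have := (le_max_iff.1 ih).resolve_left hy.not_ge
        linarith
      refine le_max_of_le_right ?_
      have hβ : 0 ≤ 1 + p * (1 - ε) := by nlinarith
      have := mul_one_sub_le_one_sub_offspringPGF hp0 hy1 hy.le
      rw [pow_succ']
      nlinarith [mul_le_mul_of_nonneg_left hyj hβ]

theorem iterate_offspringPGF_le_pow (hp0 : 0 ≤ p) (hp1 : p ≤ 1) (hε0 : 0 ≤ ε) (hε1 : ε ≤ 1)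
    {k r : ℕ} (hkr : k ≤ r) :
    (offspringPGF p)^[r] (1 - ε / (1 + p * (1 - ε)) ^ k) ≤ (1 - p * ε) ^ (r - k) := by
  set β := 1 + p * (1 - ε)
  have hβk : 1 ≤ β ^ k := one_le_pow₀ (by nlinarith)
  have hδ : ε / β ^ k ≤ ε := div_le_self hε0 hβk
  have hx0 : 0 ≤ 1 - ε / β ^ k := by linarith
  have hx1 : 1 - ε / β ^ k ≤ 1 := by linarith [div_nonneg hε0 (zero_le_one.trans hβk)]
  have hk : (offspringPGF p)^[k] (1 - ε / β ^ k) ≤ 1 - ε := by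
    have := iterate_offspringPGF_le_max hp0 hp1 hε1 hx0 hx1 k
    rwa [sub_sub_cancel, mul_div_cancel₀ _ (by positivity), max_self] at this
  have hk0 := ((mapsTo_offspringPGF_Icc hp0 hp1 le_rfl).iterate k ⟨hx0, hx1⟩).1
  obtain ⟨m, rfl⟩ : ∃ m, r = m + k := ⟨r - k, (Nat.sub_add_cancel hkr).symm⟩
  rw [Nat.add_sub_cancel, Function.iterate_add_apply]
  calc _ ≤ (1 - p * ε) ^ m * (offspringPGF p)^[k] (1 - ε / β ^ k) :=
        iterate_offspringPGF_le_pow_mul hp0 hp1 hε0 hε1 hk0 hk m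
    _ ≤ (1 - p * ε) ^ m * 1 := by
        gcongr
        · exact pow_nonneg (by nlinarith) m
        · linarith
    _ = _ := mul_one _

theorem pow_sub_ceil_mul_le {ρ θ : ℝ} (hρ0 : 0 < ρ) (hρ1 : ρ ≤ 1) (hθ0 : 0 ≤ θ) (r : ℕ) :
    ρ ^ (r - ⌈θ * r⌉₊) ≤ ρ⁻¹ * Real.exp ((1 - θ) * Real.log ρ * r) := by
  have hk : (⌈θ * r⌉₊ : ℝ) < θ * r + 1 := Nat.ceil_lt_add_one (by positivity)
  have hexp : ((1 - θ) * r - 1 : ℝ) ≤ ((r - ⌈θ * r⌉₊ : ℕ) : ℝ) := by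
    have : (r : ℝ) - ⌈θ * r⌉₊ ≤ ((r - ⌈θ * r⌉₊ : ℕ) : ℝ) := by
      rw [sub_le_iff_le_add]; exact_mod_cast (by omega : r ≤ r - ⌈θ * r⌉₊ + ⌈θ * r⌉₊)
    linarith
  calc ρ ^ (r - ⌈θ * r⌉₊) = ρ ^ (((r - ⌈θ * r⌉₊ : ℕ) : ℝ)) := (Real.rpow_natCast _ _).symm
    _ ≤ ρ ^ ((1 - θ) * r - 1) := Real.rpow_le_rpow_of_exponent_ge hρ0 hρ1 hexp
    _ = ρ⁻¹ * Real.exp ((1 - θ) * Real.log ρ * r) := by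
        rw [Real.rpow_sub hρ0, Real.rpow_one, Real.rpow_def_of_pos hρ0, div_eq_inv_mul]
        ring_nf

end Analytic

theorem measurable_sum_range {Ω : Type*} {m : MeasurableSpace Ω} {F : Ω → ℕ} {G : ℕ → Ω → ℕ}
    (hF : Measurable F) (hG : ∀ i, Measurable (G i)) :
    Measurable fun ω => ∑ i ∈ range (F ω), G i ω :=
  (measurable_from_prod_countable_right (f := fun x : ℕ × Ω => ∑ i ∈ range x.1, G i x.2)
    fun n => by exact Finset.measurable_sum (range n) fun i _ => hG i).comp
    (hF.prodMk measurable_id)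

section Integration

variable {Ω : Type*} [MeasurableSpace Ω] {μ : Measure Ω} {X : Ω → ℕ} {N : ℕ}

theorem integrable_comp_of_ae_le [IsFiniteMeasure μ] (hX : Measurable X)
    (hXN : ∀ᵐ ω ∂μ, X ω ≤ N) (h : ℕ → ℝ) : Integrable (fun ω => h (X ω)) μ := by
  refine .of_bound (measurable_from_nat.comp hX).aestronglyMeasurable
    (∑ n ∈ range (N + 1), ‖h n‖) ?_
  filter_upwards [hXN] with ω hω
  exact single_le_sum (f := fun n => ‖h n‖) (fun _ _ => norm_nonneg _)
    (mem_range.2 (Nat.lt_succ_of_le hω))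

theorem integral_comp_eq_sum_setIntegral (hX : Measurable X) (hXN : ∀ᵐ ω ∂μ, X ω ≤ N)
    {F : ℕ → Ω → ℝ} (hF : ∀ n, Integrable (F n) μ) :
    ∫ ω, F (X ω) ω ∂μ = ∑ n ∈ range (N + 1), ∫ ω in {ω | X ω = n}, F n ω ∂μ := by
  have hXn : ∀ n, MeasurableSet {ω | X ω = n} := fun n => hX (measurableSet_singleton n)
  have hsplit : (fun ω => F (X ω) ω) =ᵐ[μ]
      fun ω => ∑ n ∈ range (N + 1), {ω | X ω = n}.indicator (F n) ω := by
    filter_upwards [hXN] with ω hω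
    rw [sum_eq_single_of_mem (X ω) (mem_range.2 (Nat.lt_succ_of_le hω))
      fun n _ hn => Set.indicator_of_notMem (show ω ∉ {ω | X ω = n} from Ne.symm hn) (F n)]
    exact (Set.indicator_of_mem (show ω ∈ {ω' | X ω' = X ω} from rfl) (F (X ω))).symm
  rw [integral_congr_ae hsplit, integral_finsetSum _ fun n _ => (hF n).indicator (hXn n)]
  exact sum_congr rfl fun n _ => integral_indicator (hXn n)

theorem integral_comp_eq_sum_measureReal [IsFiniteMeasure μ] (hX : Measurable X)
    (hXN : ∀ᵐ ω ∂μ, X ω ≤ N) (g : ℕ → ℝ) :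
    ∫ ω, g (X ω) ∂μ = ∑ n ∈ range (N + 1), μ.real {ω | X ω = n} * g n := by
  rw [integral_comp_eq_sum_setIntegral (F := fun n _ => g n) hX hXN fun n => integrable_const _]
  simp only [setIntegral_const, smul_eq_mul]

theorem ae_eq_one_or_two [IsProbabilityMeasure μ] (hX : Measurable X) {p : ℝ}
    (hp0 : 0 ≤ p) (hp1 : p ≤ 1) (h1 : μ {ω | X ω = 1} = ENNReal.ofReal (1 - p))
    (h2 : μ {ω | X ω = 2} = ENNReal.ofReal p) : ∀ᵐ ω ∂μ, X ω = 1 ∨ X ω = 2 := by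
  have hdisj : Disjoint {ω | X ω = 1} {ω | X ω = 2} :=
    Set.disjoint_left.2 fun ω (h1 : X ω = 1) (h2 : X ω = 2) => by omega
  have h12 : MeasurableSet {ω | X ω = 1 ∨ X ω = 2} :=
    (hX (measurableSet_singleton 1)).union (hX (measurableSet_singleton 2))
  rw [ae_iff_measure_eq h12.nullMeasurableSet, Set.ofPred_or,
    measure_union hdisj (hX (measurableSet_singleton 2)), h1, h2,
    ← ENNReal.ofReal_add (by linarith) hp0, sub_add_cancel, ENNReal.ofReal_one, measure_univ]

theorem integral_comp_of_ae_eq_one_or_two [IsProbabilityMeasure μ] (hX : Measurable X) {p : ℝ}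
    (hp0 : 0 ≤ p) (hp1 : p ≤ 1) (hX12 : ∀ᵐ ω ∂μ, X ω = 1 ∨ X ω = 2)
    (h1 : μ {ω | X ω = 1} = ENNReal.ofReal (1 - p))
    (h2 : μ {ω | X ω = 2} = ENNReal.ofReal p) (g : ℕ → ℝ) :
    ∫ ω, g (X ω) ∂μ = (1 - p) * g 1 + p * g 2 := by
  have hX0 : μ {ω | X ω = 0} = 0 :=
    measure_mono_null (fun ω (h : X ω = 0) => by simp [h]) (ae_iff.1 hX12)
  rw [integral_comp_eq_sum_measureReal hX (N := 2) (hX12.mono fun ω h => by omega),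
    sum_range_succ, sum_range_succ, sum_range_one, measureReal_def, measureReal_def,
    measureReal_def, hX0, ENNReal.toReal_zero, h1, h2,
    ENNReal.toReal_ofReal (by linarith), ENNReal.toReal_ofReal hp0]
  ring

end Integration

section Branching

variable {Ω : Type*} {ξ : ℕ × ℕ → Ω → ℕ} {Z : ℕ → Ω → ℕ}

theorem pow_le_population (hZ0 : ∀ ω, Z 0 ω = 1)
    (hZ : ∀ r ω, Z (r + 1) ω = ∑ i ∈ range (Z r ω), ξ (r, i) ω) {a : ℕ} {ω : Ω}
    (hξ : ∀ q, a ≤ ξ q ω) (r : ℕ) : a ^ r ≤ Z r ω := by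
  induction r with
  | zero => simp [hZ0]
  | succ r ih =>
    rw [hZ, pow_succ]
    calc a ^ r * a ≤ Z r ω * a := Nat.mul_le_mul_right a ih
      _ = #(range (Z r ω)) • a := by simp [mul_comm]
      _ ≤ _ := card_nsmul_le_sum _ _ _ fun i _ => hξ (r, i)

theorem population_le_pow (hZ0 : ∀ ω, Z 0 ω = 1)
    (hZ : ∀ r ω, Z (r + 1) ω = ∑ i ∈ range (Z r ω), ξ (r, i) ω) {b : ℕ} {ω : Ω}
    (hξ : ∀ q, ξ q ω ≤ b) (r : ℕ) : Z r ω ≤ b ^ r := by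
  induction r with
  | zero => simp [hZ0]
  | succ r ih =>
    rw [hZ, pow_succ]
    calc _ ≤ #(range (Z r ω)) • b := sum_le_card_nsmul _ _ _ fun i _ => hξ (r, i)
      _ = Z r ω * b := by simp
      _ ≤ b ^ r * b := Nat.mul_le_mul_right b ih

abbrev generationsBefore (ξ : ℕ × ℕ → Ω → ℕ) (r : ℕ) : MeasurableSpace Ω :=
  ⨆ q ∈ {q : ℕ × ℕ | q.1 < r}, MeasurableSpace.comap (ξ q) inferInstance

theorem measurable_generationsBefore (hZ0 : ∀ ω, Z 0 ω = 1)
    (hZ : ∀ r ω, Z (r + 1) ω = ∑ i ∈ range (Z r ω), ξ (r, i) ω) (r : ℕ) :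
    Measurable[generationsBefore ξ r] (Z r) := by
  induction r with
  | zero => rw [funext hZ0]; exact measurable_const
  | succ r ih =>
    rw [funext (hZ r)]
    refine measurable_sum_range (ih.mono (biSup_mono fun q hq => Nat.lt_succ_of_lt hq) le_rfl)
      fun i => (comap_measurable _).mono
        (le_biSup (fun q => MeasurableSpace.comap (ξ q) inferInstance)
          (show (r, i).1 < r + 1 from Nat.lt_succ_self r)) le_rfl

variable [MeasurableSpace Ω] {μ : Measure Ω}

theorem generationsBefore_le (hmeas : ∀ q, Measurable (ξ q)) (r : ℕ) :
    generationsBefore ξ r ≤ ‹MeasurableSpace Ω› :=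
  iSup₂_le fun q _ => (hmeas q).comap_le

theorem indep_generationsBefore (hmeas : ∀ q, Measurable (ξ q)) (hind : iIndepFun ξ μ) (r : ℕ) :
    Indep (generationsBefore ξ r)
      (MeasurableSpace.comap (fun ω i => ξ (r, i) ω) MeasurableSpace.pi) μ := by
  refine indep_of_indep_of_le_right (indep_iSup_of_disjoint (fun q => (hmeas q).comap_le)
    hind.iIndep (S := {q | q.1 < r}) (T := {q | q.1 = r})
    (Set.disjoint_left.2 fun q h1 h2 => h1.ne h2)) ?_
  rw [MeasurableSpace.pi, MeasurableSpace.comap_iSup]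
  refine iSup_le fun i => ?_
  rw [MeasurableSpace.comap_comp]
  exact le_biSup (fun q => MeasurableSpace.comap (ξ q) inferInstance) (show (r, i).1 = r from rfl)

/-- `ξ (r, i)` is the number of children of the `i`-th individual of generation `r`; only the
first `Z r` of them enter `Z (r + 1)`. -/
structure IsGaltonWatson (μ : Measure Ω) (ξ : ℕ × ℕ → Ω → ℕ) (Z : ℕ → Ω → ℕ) : Prop where
  measurable_offspring : ∀ q, Measurable (ξ q)
  iIndepFun_offspring : iIndepFun ξ μ
  population_zero : ∀ ω, Z 0 ω = 1
  population_succ : ∀ r ω, Z (r + 1) ω = ∑ i ∈ range (Z r ω), ξ (r, i) ω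

namespace IsGaltonWatson

theorem measurable_population (hGW : IsGaltonWatson μ ξ Z) (r : ℕ) : Measurable (Z r) :=
  (measurable_generationsBefore hGW.population_zero hGW.population_succ r).mono
    (generationsBefore_le hGW.measurable_offspring r) le_rfl

variable [IsProbabilityMeasure μ]

theorem integral_comp_succ (hGW : IsGaltonWatson μ ξ Z) {b : ℕ}
    (hξb : ∀ᵐ ω ∂μ, ∀ q, ξ q ω ≤ b) (h : ℕ → ℝ) (r : ℕ) :
    ∫ ω, h (Z (r + 1) ω) ∂μ = ∫ ω, (∫ ω', h (∑ i ∈ range (Z r ω), ξ (r, i) ω') ∂μ) ∂μ := by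
  have hmeas := hGW.measurable_offspring
  have hZm := hGW.measurable_population r
  have hZb : ∀ᵐ ω ∂μ, Z r ω ≤ b ^ r := hξb.mono fun ω hω =>
    population_le_pow hGW.population_zero hGW.population_succ hω r
  have hS : ∀ n, Measurable fun ω => ∑ i ∈ range n, ξ (r, i) ω :=
    fun n => Finset.measurable_sum _ fun i _ => hmeas _
  have hSb : ∀ n, ∀ᵐ ω ∂μ, ∑ i ∈ range n, ξ (r, i) ω ≤ n * b := fun n => hξb.mono fun ω hω =>
    (sum_le_card_nsmul _ _ _ fun i _ => hω (r, i)).trans_eq (by simp)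
  have hX : Measurable fun ω i => ξ (r, i) ω := measurable_pi_lambda _ fun i => hmeas _
  simp_rw [hGW.population_succ]
  calc ∫ ω, h (∑ i ∈ range (Z r ω), ξ (r, i) ω) ∂μ
      = ∑ n ∈ range (b ^ r + 1), ∫ ω in {ω | Z r ω = n}, h (∑ i ∈ range n, ξ (r, i) ω) ∂μ :=
        integral_comp_eq_sum_setIntegral (F := fun n ω => h (∑ i ∈ range n, ξ (r, i) ω)) hZm hZb
          fun n => integrable_comp_of_ae_le (hS n) (hSb n) h
    _ = ∑ n ∈ range (b ^ r + 1),
          μ.real {ω | Z r ω = n} * ∫ ω, h (∑ i ∈ range n, ξ (r, i) ω) ∂μ :=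
        sum_congr rfl fun n _ =>
          (indep_generationsBefore hmeas hGW.iIndepFun_offspring r).setIntegral_eq_mul
            (A := {ω | Z r ω = n}) (f := fun x : ℕ → ℕ => h (∑ i ∈ range n, x i))
            (generationsBefore_le hmeas r) hX.aemeasurable
            (measurable_generationsBefore hGW.population_zero hGW.population_succ r
              (measurableSet_singleton n))
            (measurable_from_nat.comp (Finset.measurable_sum _ fun i _ =>
              measurable_pi_apply i)).aestronglyMeasurable
    _ = _ := (integral_comp_eq_sum_measureReal hZm hZb _).symm

theorem integral_population (hGW : IsGaltonWatson μ ξ Z) {b : ℕ}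
    (hξb : ∀ᵐ ω ∂μ, ∀ q, ξ q ω ≤ b) {m : ℝ} (hmean : ∀ q, ∫ ω, (ξ q ω : ℝ) ∂μ = m) (r : ℕ) :
    ∫ ω, (Z r ω : ℝ) ∂μ = m ^ r := by
  induction r with
  | zero => simp [hGW.population_zero]
  | succ r ih =>
    have hS : ∀ n, ∫ ω, ((∑ i ∈ range n, ξ (r, i) ω : ℕ) : ℝ) ∂μ = n * m := fun n => by
      push_cast
      rw [integral_finsetSum _ fun i _ => integrable_comp_of_ae_le
        (hGW.measurable_offspring _) (hξb.mono fun ω hω => hω (r, i)) Nat.cast]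
      simp [hmean]
    rw [hGW.integral_comp_succ hξb Nat.cast, funext fun ω => hS (Z r ω), integral_mul_const, ih,
      pow_succ]

theorem integral_pow_population (hGW : IsGaltonWatson μ ξ Z) {b : ℕ}
    (hξb : ∀ᵐ ω ∂μ, ∀ q, ξ q ω ≤ b) {φ : ℝ → ℝ} (hφ : ∀ q s, ∫ ω, s ^ ξ q ω ∂μ = φ s)
    (r : ℕ) (s : ℝ) : ∫ ω, s ^ Z r ω ∂μ = φ^[r] s := by
  induction r generalizing s with
  | zero => simp [hGW.population_zero]
  | succ r ih =>
    have hS : ∀ n, ∫ ω, s ^ (∑ i ∈ range n, ξ (r, i) ω) ∂μ = φ s ^ n := fun n => by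
      have hindn : iIndepFun (fun i : Fin n => ξ (r, i)) μ :=
        hGW.iIndepFun_offspring.precomp fun i j hij => Fin.ext (Prod.mk.inj hij).2
      simp_rw [← prod_pow_eq_pow_sum, ← Fin.prod_univ_eq_prod_range (fun i => s ^ ξ (r, i) _)]
      rw [hindn.integral_fun_prod_comp (f := fun _ k => s ^ k)
        (fun i => (hGW.measurable_offspring _).aemeasurable)
        fun i => measurable_from_nat.aestronglyMeasurable]
      simp [hφ]
    rw [hGW.integral_comp_succ hξb (s ^ ·), funext fun ω => hS (Z r ω), ih,
      Function.iterate_succ_apply]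

theorem measureReal_population_le (hGW : IsGaltonWatson μ ξ Z) {b : ℕ}
    (hξb : ∀ᵐ ω ∂μ, ∀ q, ξ q ω ≤ b) {p : ℝ} (hp0 : 0 ≤ p) (hp1 : p ≤ 1)
    (hpgf : ∀ q s, ∫ ω, s ^ ξ q ω ∂μ = offspringPGF p s) {ε : ℝ} (hε0 : 0 < ε) (hε1 : ε < 1)
    {k r : ℕ} (hkr : k ≤ r) {a : ℝ} (ha : a ≤ (1 + p * (1 - ε)) ^ k) :
    μ.real {ω | (Z r ω : ℝ) ≤ a} ≤ (1 - p * ε) ^ (r - k) / (1 - ε) := by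
  set β := 1 + p * (1 - ε)
  set δ := ε / β ^ k
  have hβk : 1 ≤ β ^ k := one_le_pow₀ (by nlinarith)
  have hδ0 : 0 ≤ δ := by positivity
  have hδε : δ ≤ ε := div_le_self hε0.le hβk
  have hβδ : β ^ k * δ = ε := mul_div_cancel₀ _ (by positivity)
  have hsub : {ω | (Z r ω : ℝ) ≤ a} ⊆ {ω | 1 - ε ≤ (1 - δ) ^ Z r ω} := fun ω (hω : _ ≤ a) => by
    have hbern := one_add_mul_sub_le_pow (a := 1 - δ) (by linarith) (Z r ω)
    have : (Z r ω : ℝ) * δ ≤ β ^ k * δ := mul_le_mul_of_nonneg_right (hω.trans ha) hδ0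
    show 1 - ε ≤ (1 - δ) ^ Z r ω
    linarith
  have hmarkov := mul_meas_ge_le_integral_of_nonneg
    (ae_of_all _ fun ω => pow_nonneg (by linarith : (0 : ℝ) ≤ 1 - δ) (Z r ω))
    (integrable_comp_of_ae_le (hGW.measurable_population r) (hξb.mono fun ω hω =>
      population_le_pow hGW.population_zero hGW.population_succ hω r) ((1 - δ) ^ ·)) (1 - ε)
  rw [le_div_iff₀ (by linarith), mul_comm]
  calc (1 - ε) * μ.real {ω | (Z r ω : ℝ) ≤ a}
      ≤ (1 - ε) * μ.real {ω | 1 - ε ≤ (1 - δ) ^ Z r ω} :=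
        mul_le_mul_of_nonneg_left (measureReal_mono hsub) (by linarith)
    _ ≤ ∫ ω, (1 - δ) ^ Z r ω ∂μ := hmarkov
    _ = (offspringPGF p)^[r] (1 - δ) := hGW.integral_pow_population hξb hpgf r _
    _ ≤ (1 - p * ε) ^ (r - k) := iterate_offspringPGF_le_pow hp0 hp1 hε0.le hε1.le hkr

theorem exists_measureReal_population_le_exp (hGW : IsGaltonWatson μ ξ Z) {b : ℕ}
    (hξb : ∀ᵐ ω ∂μ, ∀ q, ξ q ω ≤ b) {p : ℝ} (hp0 : 0 < p) (hp1 : p ≤ 1)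
    (hpgf : ∀ q s, ∫ ω, s ^ ξ q ω ∂μ = offspringPGF p s) {γ : ℝ} (hγ1 : 1 < γ)
    (hγp : γ < 1 + p) :
    ∃ c c' : ℝ, 0 < c ∧ 0 < c' ∧ ∀ r : ℕ,
      μ.real {ω | (Z r ω : ℝ) ≤ γ ^ r} ≤ c * Real.exp (-c' * r) := by
  -- `β = (γ + 1 + p) / 2` lies strictly between `γ` and the mean `1 + p`.
  set ε := (1 + p - γ) / (2 * p)
  have hε : p * ε = (1 + p - γ) / 2 := by simp only [ε]; field_simp
  set β := 1 + p * (1 - ε)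
  set ρ := 1 - p * ε
  have hε0 : 0 < ε := by positivity
  have hε1 : ε < 1 := by rw [div_lt_one (by positivity)]; linarith
  have hγβ : γ < β := by linarith
  have hρ0 : 0 < ρ := by linarith
  have hρ1 : ρ < 1 := by linarith
  set θ := Real.logb β γ
  have hθ0 : 0 < θ := Real.logb_pos (by linarith) hγ1
  have hθ1 : θ < 1 := by
    rwa [Real.logb_lt_iff_lt_rpow (by linarith) (by linarith), Real.rpow_one]
  refine ⟨ρ⁻¹ / (1 - ε), -((1 - θ) * Real.log ρ), by positivity,
    neg_pos.2 (mul_neg_of_pos_of_neg (by linarith) (Real.log_neg hρ0 hρ1)), fun r => ?_⟩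
  have hkr : ⌈θ * r⌉₊ ≤ r := Nat.ceil_le.2 (by nlinarith [(Nat.cast_nonneg r : (0 : ℝ) ≤ r)])
  have hγβk : γ ^ r ≤ β ^ ⌈θ * r⌉₊ := by
    rw [← Real.rpow_natCast β, ← Real.rpow_logb (b := β) (x := γ) (by linarith) (by linarith)
      (by linarith), ← Real.rpow_mul_natCast (by linarith)]
    exact Real.rpow_le_rpow_of_exponent_le (by linarith) (Nat.le_ceil _)
  calc μ.real {ω | (Z r ω : ℝ) ≤ γ ^ r} ≤ ρ ^ (r - ⌈θ * r⌉₊) / (1 - ε) :=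
        hGW.measureReal_population_le hξb hp0.le hp1 hpgf hε0 hε1 hkr hγβk
    _ ≤ ρ⁻¹ * Real.exp ((1 - θ) * Real.log ρ * r) / (1 - ε) :=
        div_le_div_of_nonneg_right (pow_sub_ceil_mul_le hρ0 hρ1.le hθ0.le r) (by linarith)
    _ = ρ⁻¹ / (1 - ε) * Real.exp (-(-((1 - θ) * Real.log ρ)) * r) := by ring_nf

end IsGaltonWatson

end Branching

end GaltonWatson

open GaltonWatson

/-- Let `Z_r` be a Galton-Watson branching process with offspring distribution `ξ`
satisfying `P(ξ = 1) = 1 - p` and `P(ξ = 2) = p` for some `0 < p ≤ 1`, started from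
`Z_0 = 1` (built from an i.i.d. array `ξ (r, i)` of offspring variables).  Then
`P(Z_r = 0) = 0` for all `r`, `E(Z_r) = (1+p)^r`, and for any `1 < γ < 1 + p` there are
positive constants `c, c'` with `P(Z_r ≤ γ^r) ≤ c exp(-c' r)` for all `r`. -/
theorem stmt_14 (Ω : Type) [MeasurableSpace Ω] (μ : Measure Ω) [IsProbabilityMeasure μ]
    (p : ℝ) (hp0 : 0 < p) (hp1 : p ≤ 1)
    (ξ : ℕ × ℕ → Ω → ℕ)
    (hmeas : ∀ q, Measurable (ξ q))
    (hind : iIndepFun ξ μ)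
    (hdist1 : ∀ q, μ {ω | ξ q ω = 1} = ENNReal.ofReal (1 - p))
    (hdist2 : ∀ q, μ {ω | ξ q ω = 2} = ENNReal.ofReal p)
    (Z : ℕ → Ω → ℕ) (hZ0 : ∀ ω, Z 0 ω = 1)
    (hZ : ∀ r ω, Z (r + 1) ω = ∑ i ∈ Finset.range (Z r ω), ξ (r, i) ω) :
    (∀ r, μ {ω | Z r ω = 0} = 0) ∧
    (∀ r, ∫ ω, (Z r ω : ℝ) ∂μ = (1 + p) ^ r) ∧
    (∀ γ : ℝ, 1 < γ → γ < 1 + p → ∃ c c' : ℝ, 0 < c ∧ 0 < c' ∧ ∀ r : ℕ,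
      (μ {ω | (Z r ω : ℝ) ≤ γ ^ r}).toReal ≤ c * Real.exp (-c' * r)) := by
  have hGW : IsGaltonWatson μ ξ Z := ⟨hmeas, hind, hZ0, hZ⟩
  have hξ12 : ∀ᵐ ω ∂μ, ∀ q, ξ q ω = 1 ∨ ξ q ω = 2 :=
    ae_all_iff.2 fun q => ae_eq_one_or_two (hmeas q) hp0.le hp1 (hdist1 q) (hdist2 q)
  have hξ1 : ∀ᵐ ω ∂μ, ∀ q, 1 ≤ ξ q ω := hξ12.mono fun ω h q => by rcases h q with h | h <;> omega
  have hξ2 : ∀ᵐ ω ∂μ, ∀ q, ξ q ω ≤ 2 := hξ12.mono fun ω h q => by rcases h q with h | h <;> omega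
  have hlaw (q : ℕ × ℕ) (g : ℕ → ℝ) : ∫ ω, g (ξ q ω) ∂μ = (1 - p) * g 1 + p * g 2 :=
    integral_comp_of_ae_eq_one_or_two (hmeas q) hp0.le hp1 (hξ12.mono fun ω h => h q)
      (hdist1 q) (hdist2 q) g
  refine ⟨fun r => ?_, hGW.integral_population hξ2 fun q => ?_,
    fun γ hγ1 hγp => hGW.exists_measureReal_population_le_exp hξ2 hp0 hp1
      (fun q s => by rw [hlaw q (s ^ ·), offspringPGF]; ring) hγ1 hγp⟩
  · have hpos : ∀ᵐ ω ∂μ, Z r ω ≠ 0 := hξ1.mono fun ω h =>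
      Nat.one_le_iff_ne_zero.1 (by simpa using pow_le_population hZ0 hZ h r)
    simpa using ae_iff.1 hpos
  · rw [hlaw]; push_cast; ring
end
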